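/- For a birth-and-death chain as above, suppose there exist constants C > 0, ε ∈ (0,1], and i₀ such that p_i/q_i ≤ 1 + 1/i + C/i^{1+ε} for all i ≥ i₀. Then the series ∑_{i=1}^∞ ∏_{n=1}^{i} (q_n/p_n) diverges. -/

import Mathlib

/-!
Since `p_n / q_n ≤ 1 + 1/n + b_n ≤ (1 + 1/n)(1 + b_n)` with `b_n = C / n^(1+ε)` summable, each factor
`q_n / p_n` is at least `n/(n+1) · (1 + b_n)⁻¹`. Over `m < n ≤ i` the factors `n/(n+1)` telescope to
`(m+1)/(i+1)` and the product of the `(1 + b_n)⁻¹` is at least `exp (-∑ b)`, so the `i`-th term of the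
series is at least a constant times `1/(i+1)`, and the harmonic series diverges.
-/

open Finset Filter

lemma prod_Ioc_one_add_inv_natCast {m i : ℕ} (hmi : m ≤ i) :
    ∏ n ∈ Ioc m i, (1 + 1 / (n : ℝ)) = (i + 1) / (m + 1) := by
  induction i, hmi using Nat.le_induction with
  | base => rw [Ioc_self, prod_empty, div_self (by positivity)]
  | succ i hmi ih =>
    rw [prod_Ioc_succ_top hmi, ih]
    push_cast
    field_simp

lemma not_summable_of_eventually_div_succ_le {f : ℕ → ℝ} {c : ℝ} (hc : 0 < c)
    (hf : ∀ᶠ i in atTop, c / (i + 1) ≤ f i) : ¬ Summable f := by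
  intro hsum
  have hharm : Summable (fun i : ℕ => ((i + 1 : ℕ) : ℝ)⁻¹) := by
    refine (hsum.mul_left c⁻¹).of_norm_bounded_eventually_nat ?_
    filter_upwards [hf] with i hi
    rw [Real.norm_of_nonneg (by positivity), le_inv_mul_iff₀ hc]
    simpa [div_eq_mul_inv] using hi
  exact Real.not_summable_natCast_inv ((summable_nat_add_iff 1).mp hharm)

section ProductLowerBound

variable {a b : ℕ → ℝ} {m : ℕ}

lemma inv_div_succ_mul_exp_tsum_le_prod_Ioc (ha : ∀ n > m, 0 < a n) (hb : ∀ n, 0 ≤ b n)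
    (hbs : Summable b) (hab : ∀ n > m, (a n)⁻¹ ≤ (1 + 1 / n) * (1 + b n)) {i : ℕ} (hmi : m ≤ i) :
    ((i + 1) / (m + 1) * Real.exp (∑' n, b n))⁻¹ ≤ ∏ n ∈ Ioc m i, a n := by
  have hexp : ∏ n ∈ Ioc m i, (1 + b n) ≤ Real.exp (∑' n, b n) :=
    (Real.prod_one_add_le_exp_sum _ hb).trans
      (Real.exp_le_exp.mpr (hbs.sum_le_tsum _ fun n _ => hb n))
  calc ((i + 1) / (m + 1) * Real.exp (∑' n, b n))⁻¹
      ≤ ((∏ n ∈ Ioc m i, (1 + 1 / (n : ℝ))) * ∏ n ∈ Ioc m i, (1 + b n))⁻¹ := by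
        rw [prod_Ioc_one_add_inv_natCast hmi]
        gcongr
        exact mul_pos (by positivity) (prod_pos fun n _ => by linarith [hb n])
    _ = ∏ n ∈ Ioc m i, ((1 + 1 / (n : ℝ)) * (1 + b n))⁻¹ := by
        rw [← prod_mul_distrib, prod_inv_distrib]
    _ ≤ ∏ n ∈ Ioc m i, a n := by
        refine prod_le_prod (fun n _ => by have := hb n; positivity) fun n hn => ?_
        have hn : m < n := (mem_Ioc.mp hn).1
        simpa using inv_anti₀ (inv_pos.mpr (ha n hn)) (hab n hn)

theorem not_summable_prod_Icc_of_inv_le (ha : ∀ n ≥ 1, 0 < a n) (hb : ∀ n, 0 ≤ b n)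
    (hbs : Summable b) (hab : ∀ n > m, (a n)⁻¹ ≤ (1 + 1 / n) * (1 + b n)) :
    ¬ Summable (fun i => ∏ n ∈ Icc 1 i, a n) := by
  set c₀ := ∏ n ∈ Icc 1 m, a n
  have hc₀ : 0 < c₀ := prod_pos fun n hn => ha n (mem_Icc.mp hn).1
  refine not_summable_of_eventually_div_succ_le
    (c := c₀ * (m + 1) / Real.exp (∑' n, b n)) (by positivity) ?_
  filter_upwards [eventually_ge_atTop m] with i hmi
  have hsplit : c₀ * ∏ n ∈ Ioc m i, a n = ∏ n ∈ Icc 1 i, a n := by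
    simpa only [← Icc_add_one_left_eq_Ioc, zero_add] using prod_Ioc_consecutive a m.zero_le hmi
  calc c₀ * (m + 1) / Real.exp (∑' n, b n) / (i + 1)
      = c₀ * ((i + 1) / (m + 1) * Real.exp (∑' n, b n))⁻¹ := by field_simp
    _ ≤ ∏ n ∈ Icc 1 i, a n := by
        rw [← hsplit]
        gcongr
        exact inv_div_succ_mul_exp_tsum_le_prod_Ioc (fun n hn => ha n (by omega)) hb hbs hab hmi

end ProductLowerBound

theorem stmt9 (p q : ℕ → ℝ) (h : ∀ i ≥ 1, 0 < p i ∧ p i < 1 ∧ q i = 1 - p i)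
    (C ε : ℝ) (hC : 0 < C) (hε : 0 < ε ∧ ε ≤ 1) (i₀ : ℕ)
    (hratio : ∀ i ≥ i₀, 1 ≤ i → p i / q i ≤ 1 + 1/(i:ℝ) + C/(i:ℝ)^(1+ε)) :
    ¬ Summable (fun i : ℕ => ∏ n ∈ Finset.Icc 1 i, q n / p n) := by
  have hpq : ∀ n ≥ 1, 0 < p n ∧ 0 < q n := fun n hn => by
    obtain ⟨hp, hp1, hq⟩ := h n hn
    exact ⟨hp, by linarith⟩
  have hbs : Summable fun n : ℕ => C / (n : ℝ) ^ (1 + ε) := by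
    simpa [div_eq_mul_inv] using
      (Real.summable_nat_rpow_inv.mpr (by linarith [hε.1])).mul_left C
  refine not_summable_prod_Icc_of_inv_le (m := i₀)
    (fun n hn => div_pos (hpq n hn).2 (hpq n hn).1) (fun n => by positivity) hbs fun n hn => ?_
  have hn : i₀ ≤ n ∧ 1 ≤ n := by omega
  calc (q n / p n)⁻¹ = p n / q n := inv_div _ _
    _ ≤ 1 + 1 / n + C / (n : ℝ) ^ (1 + ε) := hratio n hn.1 hn.2
    _ ≤ 1 + 1 / n + C / (n : ℝ) ^ (1 + ε) + 1 / n * (C / (n : ℝ) ^ (1 + ε)) :=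
        le_add_of_nonneg_right (by positivity)
    _ = (1 + 1 / n) * (1 + C / (n : ℝ) ^ (1 + ε)) := by ring
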